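/- arXiv:1306.1007 — 2 statements merged into one kernel-verified Lean document; each statement's English description precedes it below -/
import Mathlib

section
/- The conformal line trivector satisfies P₁∧P₂∧n = p₁∧p₂∧n + (p₂ − p₁)N, i.e. it equals m·n + dN where m = p₁∧p₂ is the moment bivector and d = p₂ − p₁ is the direction vector of the line, with N = n∧n̄. -/
/-!
With `P = p + ½p² n + n̄`, multilinearity and alternation of the wedge kill every term of
`P₁ ∧ P₂ ∧ n` in which `n` or `n̄` occurs twice, leaving `p₁ ∧ p₂ ∧ n + (p₂ − p₁) ∧ n ∧ n̄`.
Euclidean vectors are orthogonal to `n` and `n̄`, so they anticommute with them in the Clifford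
algebra, and a wedge of three vectors one of which anticommutes with the other two is the
geometric product of that vector with the wedge of the other two.
-/

noncomputable section
open scoped RealInnerProductSpace

/-- Euclidean 3-space. -/
abbrev E3 : Type := EuclideanSpace ℝ (Fin 3)

/-- The 5-dimensional space ℝ^{4,1}: Euclidean part plus coefficients of the
null vectors n (infinity) and n̄ (origin). -/
abbrev V5 : Type := E3 × ℝ × ℝ

/-- Symmetric bilinear form of signature (4,1):
`⟪p,q⟫` on the Euclidean part, and `n·n̄ = -1` on the null pair. -/
def B5 : LinearMap.BilinForm ℝ V5 := LinearMap.mk₂ ℝ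
  (fun x y => ⟪x.1, y.1⟫ - x.2.1 * y.2.2 - x.2.2 * y.2.1)
  (fun m₁ m₂ y => by simp only [Prod.fst_add, Prod.snd_add, inner_add_left]; ring)
  (fun c m y => by simp only [Prod.smul_fst, Prod.smul_snd, smul_eq_mul, real_inner_smul_left]; ring)
  (fun m y₁ y₂ => by simp only [Prod.fst_add, Prod.snd_add, inner_add_right]; ring)
  (fun c m y => by simp only [Prod.smul_fst, Prod.smul_snd, smul_eq_mul, real_inner_smul_right]; ring)

/-- The quadratic form of R_{4,1}. -/
def Q5 : QuadraticForm ℝ V5 := B5.toQuadraticMap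

/-- The Clifford geometric algebra R_{4,1}. -/
abbrev Cl : Type := CliffordAlgebra Q5

def ι5 : V5 →ₗ[ℝ] Cl := CliffordAlgebra.ι Q5

/-- Embedding of a Euclidean vector as a grade-1 element. -/
def ev (p : E3) : Cl := ι5 (p, 0, 0)

/-- The null vector n representing infinity. -/
def nInf : Cl := ι5 (0, 1, 0)

/-- The null vector n̄ representing the origin. -/
def nOri : Cl := ι5 (0, 0, 1)

/-- The conformal point P = p + (1/2)p² n + n̄. -/
def cpt (p : E3) : Cl := ι5 (p, ⟪p, p⟫ / 2, 1)

/-- Outer (wedge) product of two vectors (grade-1 elements): antisymmetrized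
geometric product. -/
def w2 (a b : Cl) : Cl := (2:ℝ)⁻¹ • (a * b - b * a)

/-- Outer (wedge) product of three vectors. -/
def w3 (a b c : Cl) : Cl := (6:ℝ)⁻¹ •
  (a*b*c - a*c*b - b*a*c + b*c*a + c*a*b - c*b*a)

/-- Outer (wedge) product of a vector with a bivector. -/
def vwB (v B : Cl) : Cl := (2:ℝ)⁻¹ • (v * B + B * v)

/-- Left contraction of a vector into a bivector. -/
def lcontr (v B : Cl) : Cl := (2:ℝ)⁻¹ • (v * B - B * v)

/-- The Minkowski plane bivector N = n ∧ n̄. -/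
def Nb : Cl := w2 nInf nOri

lemma Q5_isOrtho_null_euclidean (s t : ℝ) (p : E3) : Q5.IsOrtho (0, s, t) (p, 0, 0) := by
  simp only [QuadraticMap.isOrtho_def, Q5, LinearMap.BilinMap.toQuadraticMap_apply, B5,
    LinearMap.mk₂_apply, Prod.mk_add_mk, zero_add, add_zero, inner_zero_right]
  ring

lemma ι5_null_mul_ev (p : E3) (s t : ℝ) : ι5 (0, s, t) * ev p = -(ev p * ι5 (0, s, t)) :=
  CliffordAlgebra.ι_mul_ι_comm_of_isOrtho (Q5_isOrtho_null_euclidean s t p)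

lemma nInf_mul_ev (p : E3) : nInf * ev p = -(ev p * nInf) := ι5_null_mul_ev p 1 0

lemma nOri_mul_ev (p : E3) : nOri * ev p = -(ev p * nOri) := ι5_null_mul_ev p 0 1

lemma cpt_eq (p : E3) : cpt p = ev p + (⟪p, p⟫ / 2) • nInf + nOri := by
  simp only [cpt, ev, nInf, nOri, ← map_smul, ← map_add, Prod.smul_mk, Prod.mk_add_mk]
  simp

lemma ev_sub (p q : E3) : ev (p - q) = ev p - ev q := by
  simp only [ev, ← map_sub, Prod.mk_sub_mk, sub_zero]

-- `w3` is alternating and trilinear: every term with `c` or `d` repeated cancels.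
lemma w3_add_smul_add_add_smul_add (a b c d : Cl) (s t : ℝ) :
    w3 (a + s • c + d) (b + t • c + d) c = w3 a b c + w3 (b - a) c d := by
  simp only [w3, mul_add, add_mul, mul_sub, sub_mul, smul_mul_assoc, mul_smul_comm]
  module

lemma w3_eq_w2_mul_of_anticomm {a b c : Cl} (ha : c * a = -(a * c)) (hb : c * b = -(b * c)) :
    w3 a b c = w2 a b * c := by
  have hac : a * c * b = -(a * b * c) := by rw [mul_assoc, hb, mul_neg, mul_assoc]
  have hbc : b * c * a = -(b * a * c) := by rw [mul_assoc, ha, mul_neg, mul_assoc]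
  simp only [w3, w2, sub_mul, smul_mul_assoc, hac, hbc, ha, hb, neg_mul, mul_assoc]
  module

lemma w3_eq_mul_w2_of_anticomm {a b c : Cl} (hb : b * a = -(a * b)) (hc : c * a = -(a * c)) :
    w3 a b c = a * w2 b c := by
  have hbc : b * a * c = -(a * b * c) := by rw [hb, neg_mul]
  have hcb : c * a * b = -(a * c * b) := by rw [hc, neg_mul]
  have hbca : b * c * a = a * b * c := by rw [mul_assoc, hc, mul_neg, ← mul_assoc, hbc, neg_neg]
  have hcba : c * b * a = a * c * b := by rw [mul_assoc, hb, mul_neg, ← mul_assoc, hcb, neg_neg]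
  simp only [w3, w2, mul_sub, mul_smul_comm, hbc, hcb, hbca, hcba, ← mul_assoc]
  module

/-- the line trivector P₁∧P₂∧n = p₁∧p₂∧n + (p₂−p₁)N = m n + d N. -/
theorem line_trivector (p₁ p₂ : E3) :
    w3 (cpt p₁) (cpt p₂) nInf =
        w3 (ev p₁) (ev p₂) nInf + ev (p₂ - p₁) * Nb ∧
    w3 (cpt p₁) (cpt p₂) nInf =
        w2 (ev p₁) (ev p₂) * nInf + ev (p₂ - p₁) * Nb := by
  have hline : w3 (cpt p₁) (cpt p₂) nInf = w3 (ev p₁) (ev p₂) nInf + ev (p₂ - p₁) * Nb := by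
    rw [cpt_eq, cpt_eq, w3_add_smul_add_add_smul_add, ← ev_sub, Nb,
      w3_eq_mul_w2_of_anticomm (nInf_mul_ev _) (nOri_mul_ev _)]
  refine ⟨hline, ?_⟩
  rw [hline, w3_eq_w2_mul_of_anticomm (nInf_mul_ev p₁) (nInf_mul_ev p₂)]
end
end

section
/- Let V₃ = P₁∧P₂∧P₃ be the conformal trivector of three conformal points lying on a circle of radius r with plane bivector I_c ≠ 0. Then V₃² = −r²I_c², so r² = −V₃²/I_c². -/
noncomputable section
open scoped RealInnerProductSpace

/-! For vectors `x, y` of `R_{4,1}` the anticommutator `xy + yx` is the scalar `2 B(x, y)`, so the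
square of the wedge of two or three vectors is minus the Gram determinant of their inner products.
Conformal points satisfy `B(P, Q) = -‖p - q‖² / 2`, which makes `V₃²` the product of the squared
sides of the triangle over `4`, while `I_c²` is minus its squared doubled area. As `r₁` lies in the
plane of `I_c`, so does the centre, and the claim is the circumradius formula `abc = 4 r · area`. -/

open Matrix

theorem B5_apply (x y : V5) : B5 x y = ⟪x.1, y.1⟫ - x.2.1 * y.2.2 - x.2.2 * y.2.1 := rfl

theorem B5_comm (x y : V5) : B5 x y = B5 y x := by
  simp only [B5_apply, real_inner_comm x.1]; ring

theorem ι5_mul_self (x : V5) : ι5 x * ι5 x = B5 x x • 1 := by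
  rw [ι5, CliffordAlgebra.ι_sq_scalar, Algebra.algebraMap_eq_smul_one]; rfl

theorem polar_Q5 (x y : V5) : QuadraticMap.polar Q5 x y = 2 * B5 x y := by
  rw [Q5, LinearMap.BilinMap.polar_toQuadraticMap, B5_comm y, two_mul]

theorem ι5_mul_add_swap (x y : V5) : ι5 x * ι5 y + ι5 y * ι5 x = (2 * B5 x y) • 1 := by
  rw [ι5, CliffordAlgebra.ι_mul_ι_add_swap, Algebra.algebraMap_eq_smul_one, polar_Q5]

theorem ι5_mul_ι5_mul_self (x : V5) (z : Cl) : ι5 x * (ι5 x * z) = B5 x x • z := by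
  rw [← mul_assoc, ι5_mul_self, smul_one_mul]

theorem ι5_mul_swap (x y : V5) : ι5 y * ι5 x = (2 * B5 x y) • 1 - ι5 x * ι5 y :=
  eq_sub_of_add_eq' (ι5_mul_add_swap x y)

theorem ι5_mul_ι5_mul_swap (x y : V5) (z : Cl) :
    ι5 y * (ι5 x * z) = (2 * B5 x y) • z - ι5 x * (ι5 y * z) := by
  rw [← mul_assoc, ι5_mul_swap, sub_mul, smul_one_mul, mul_assoc]

theorem w2_ι5_mul_self (v : Fin 2 → V5) :
    w2 (ι5 (v 0)) (ι5 (v 1)) * w2 (ι5 (v 0)) (ι5 (v 1)) =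
      (-(of fun i j => B5 (v i) (v j)).det) • 1 := by
  simp only [w2, smul_sub, mul_sub, sub_mul, smul_mul_assoc, mul_smul_comm, mul_assoc,
    ι5_mul_ι5_mul_swap (v 0) (v 1), ι5_mul_self, ι5_mul_swap (v 0) (v 1), smul_smul, mul_one,
    one_mul]
  rw [det_fin_two]
  simp only [of_apply, B5_comm (v 1) (v 0)]
  module

theorem w3_ι5_mul_self (v : Fin 3 → V5) :
    w3 (ι5 (v 0)) (ι5 (v 1)) (ι5 (v 2)) * w3 (ι5 (v 0)) (ι5 (v 1)) (ι5 (v 2)) =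
      (-(of fun i j => B5 (v i) (v j)).det) • 1 := by
  simp only [w3, smul_sub, smul_add, mul_sub, sub_mul, mul_add, add_mul, smul_mul_assoc,
    mul_smul_comm, mul_assoc, ι5_mul_ι5_mul_self, ι5_mul_ι5_mul_swap (v 0) (v 1),
    ι5_mul_ι5_mul_swap (v 0) (v 2), ι5_mul_ι5_mul_swap (v 1) (v 2), ι5_mul_self,
    ι5_mul_swap (v 0) (v 1), ι5_mul_swap (v 0) (v 2), ι5_mul_swap (v 1) (v 2), smul_smul, mul_one,
    one_mul]
  rw [det_fin_three]
  simp only [of_apply, B5_comm (v 1) (v 0), B5_comm (v 2) (v 0), B5_comm (v 2) (v 1)]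
  module

theorem vwB_ι5_w2 (v : Fin 3 → V5) :
    vwB (ι5 (v 0)) (w2 (ι5 (v 1)) (ι5 (v 2))) = w3 (ι5 (v 0)) (ι5 (v 1)) (ι5 (v 2)) := by
  simp only [w2, w3, vwB, smul_sub, smul_add, mul_sub, sub_mul, smul_mul_assoc, mul_smul_comm,
    mul_assoc, ι5_mul_ι5_mul_swap (v 0) (v 1), ι5_mul_swap (v 0) (v 1), ι5_mul_swap (v 0) (v 2),
    ι5_mul_swap (v 1) (v 2), smul_smul, mul_one, one_mul]
  module

theorem B5_ev (a b : E3) : B5 (a, 0, 0) (b, 0, 0) = ⟪a, b⟫ := by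
  simp [B5_apply]

theorem B5_cpt (p q : E3) : B5 (p, ⟪p, p⟫ / 2, 1) (q, ⟪q, q⟫ / 2, 1) = -(‖p - q‖ ^ 2 / 2) := by
  rw [B5_apply, norm_sub_sq_real, ← real_inner_self_eq_norm_sq, ← real_inner_self_eq_norm_sq]
  ring

theorem w2_ev_mul_self (a b : E3) :
    w2 (ev a) (ev b) * w2 (ev a) (ev b) = (-(gram ℝ ![a, b]).det) • 1 := by
  refine (w2_ι5_mul_self fun i => (![a, b] i, 0, 0)).trans ?_
  simp only [B5_ev]
  rfl

theorem w3_ev_mul_self (a b c : E3) :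
    w3 (ev a) (ev b) (ev c) * w3 (ev a) (ev b) (ev c) = (-(gram ℝ ![a, b, c]).det) • 1 := by
  refine (w3_ι5_mul_self fun i => (![a, b, c] i, 0, 0)).trans ?_
  simp only [B5_ev]
  rfl

theorem vwB_ev_w2 (a b c : E3) : vwB (ev a) (w2 (ev b) (ev c)) = w3 (ev a) (ev b) (ev c) :=
  vwB_ι5_w2 ![(a, 0, 0), (b, 0, 0), (c, 0, 0)]

theorem ev_smul (t : ℝ) (u : E3) : ev (t • u) = t • ev u := by
  rw [ev, ev, ← map_smul, Prod.smul_mk, Prod.smul_mk, smul_zero]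

theorem vwB_smul_left (t : ℝ) (u B : Cl) : vwB (t • u) B = t • vwB u B := by
  simp only [vwB, smul_mul_assoc, mul_smul_comm, ← smul_add, smul_comm t]

theorem det_gram_eq_zero_of_vwB_ev_w2_eq_zero {u a b : E3}
    (h : vwB (ev u) (w2 (ev a) (ev b)) = 0) : (gram ℝ ![u, a, b]).det = 0 := by
  have hsq := w3_ev_mul_self u a b
  rw [← vwB_ev_w2, h, zero_mul, eq_comm, smul_eq_zero] at hsq
  simpa using hsq

theorem w3_cpt_mul_self (p₁ p₂ p₃ : E3) :
    w3 (cpt p₁) (cpt p₂) (cpt p₃) * w3 (cpt p₁) (cpt p₂) (cpt p₃) =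
      (‖p₁ - p₂‖ ^ 2 * ‖p₁ - p₃‖ ^ 2 * ‖p₂ - p₃‖ ^ 2 / 4) • 1 := by
  let p := ![p₁, p₂, p₃]
  refine (w3_ι5_mul_self fun i => (p i, ⟪p i, p i⟫ / 2, 1)).trans ?_
  simp only [B5_cpt]
  simp [p, det_fin_three, norm_sub_rev]
  ring

theorem sides_sq_prod_eq_four_mul_radius_sq_mul_det_gram {E : Type*} [NormedAddCommGroup E]
    [InnerProductSpace ℝ E] {c p₁ p₂ p₃ : E} {r : ℝ} (h₁ : p₁ ∈ Metric.sphere c r)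
    (h₂ : p₂ ∈ Metric.sphere c r) (h₃ : p₃ ∈ Metric.sphere c r)
    (hplanar : (gram ℝ ![p₁ - c, p₁ - p₂, p₂ - p₃]).det = 0) :
    ‖p₁ - p₂‖ ^ 2 * ‖p₁ - p₃‖ ^ 2 * ‖p₂ - p₃‖ ^ 2 =
      4 * r ^ 2 * (gram ℝ ![p₁ - p₂, p₂ - p₃]).det := by
  rw [mem_sphere_iff_norm] at h₁ h₂ h₃
  obtain ⟨x₁, rfl⟩ : ∃ x, p₁ = x + c := ⟨p₁ - c, (sub_add_cancel _ _).symm⟩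
  obtain ⟨x₂, rfl⟩ : ∃ x, p₂ = x + c := ⟨p₂ - c, (sub_add_cancel _ _).symm⟩
  obtain ⟨x₃, rfl⟩ : ∃ x, p₃ = x + c := ⟨p₃ - c, (sub_add_cancel _ _).symm⟩
  simp only [add_sub_cancel_right, add_sub_add_right_eq_sub] at h₁ h₂ h₃ hplanar ⊢
  simp [det_fin_three, det_fin_two, inner_sub_left, inner_sub_right, norm_sub_sq_real,
    h₁, h₂, h₃, real_inner_comm x₁ x₂, real_inner_comm x₁ x₃,
    real_inner_comm x₂ x₃] at hplanar ⊢
  -- on a sphere, LHS = 4 r² det G(a, b) - 4 det G(p₁ - c, a, b), a = p₁ - p₂, b = p₂ - p₃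
  linear_combination (-4) * hplanar

theorem circle_trivector_square_general
    (c : E3) (r : ℝ) (hr : 0 < r)
    (r₁ r₂ r₃ : E3) (h₁ : ‖r₁‖ = 1) (h₂ : ‖r₂‖ = 1) (h₃ : ‖r₃‖ = 1)
    (p₁ p₂ p₃ : E3)
    (hp₁ : p₁ = c + r • r₁) (hp₂ : p₂ = c + r • r₂) (hp₃ : p₃ = c + r • r₃)
    (Ic : Cl) (hIc : Ic = w2 (ev (p₁ - p₂)) (ev (p₂ - p₃)))
    (hin₁ : vwB (ev r₁) Ic = 0) :
    w3 (cpt p₁) (cpt p₂) (cpt p₃) * w3 (cpt p₁) (cpt p₂) (cpt p₃) =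
      (-(r ^ 2)) • (Ic * Ic) := by
  have on_sphere {p u : E3} (hu : ‖u‖ = 1) (hp : p = c + r • u) : p ∈ Metric.sphere c r := by
    rw [hp, mem_sphere_iff_norm, add_sub_cancel_left, norm_smul, hu, mul_one,
      Real.norm_of_nonneg hr.le]
  have hplanar : (gram ℝ ![p₁ - c, p₁ - p₂, p₂ - p₃]).det = 0 := by
    refine det_gram_eq_zero_of_vwB_ev_w2_eq_zero ?_
    rw [← hIc, hp₁, add_sub_cancel_left, ev_smul, vwB_smul_left, hin₁, smul_zero]
  rw [w3_cpt_mul_self, hIc, w2_ev_mul_self, smul_smul]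
  congr 1
  linear_combination (1 / 4) * sides_sq_prod_eq_four_mul_radius_sq_mul_det_gram
    (on_sphere h₁ hp₁) (on_sphere h₂ hp₂) (on_sphere h₃ hp₃) hplanar

/-- V₃² = −r² I_c². -/
theorem circle_trivector_square
    (c : E3) (r : ℝ) (hr : 0 < r)
    (r₁ r₂ r₃ : E3) (h₁ : ‖r₁‖ = 1) (h₂ : ‖r₂‖ = 1) (h₃ : ‖r₃‖ = 1)
    (p₁ p₂ p₃ : E3)
    (hp₁ : p₁ = c + r • r₁) (hp₂ : p₂ = c + r • r₂) (hp₃ : p₃ = c + r • r₃)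
    (Ic : Cl) (hIc : Ic = w2 (ev (p₁ - p₂)) (ev (p₂ - p₃)))
    (hin₁ : vwB (ev r₁) Ic = 0) (hin₂ : vwB (ev r₂) Ic = 0)
    (hin₃ : vwB (ev r₃) Ic = 0)
    (hIc0 : Ic ≠ 0) :
    w3 (cpt p₁) (cpt p₂) (cpt p₃) * w3 (cpt p₁) (cpt p₂) (cpt p₃) =
      (-(r ^ 2)) • (Ic * Ic) :=
  circle_trivector_square_general c r hr r₁ r₂ r₃ h₁ h₂ h₃ p₁ p₂ p₃ hp₁ hp₂ hp₃ Ic hIc hin₁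
end
end
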